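/- Let d ∈ ℕ^I be nonzero and let θ, ω ∈ ℝ^I lie in the same facet of the hyperplane arrangement ℋ(d), i.e. sgn(f(d,e)(θ)) = sgn(f(d,e)(ω)) for every e ∈ S_d. Let M and N be objects of 𝒜 with φ(M) = φ(N) = d, both θ-semistable, and suppose M is S_θ-equivalent to N. Then M and N are ω-semistable and M is S_ω-equivalent to N. -/

import Mathlib

open CategoryTheory CategoryTheory.Limits

variable {𝒜 : Type*} [Category 𝒜] [Abelian 𝒜] {I : Type*} [Fintype I]

/-- The `θ`-degree of an object `M`: `deg_θ(M) = ∑ i, θ i * φ i M`. -/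
noncomputable def degTheta (φ : I → 𝒜 → ℤ) (θ : I → ℝ) (M : 𝒜) : ℝ :=
  ∑ i, θ i * (φ i M : ℝ)

/-- The rank of an object `M`: `rk(M) = ∑ i, φ i M`. -/
def rkPhi (φ : I → 𝒜 → ℤ) (M : 𝒜) : ℤ := ∑ i, φ i M

/-- The `θ`-slope of an object `M`: `μ_θ(M) = deg_θ(M) / rk(M)`. -/
noncomputable def muSlope (φ : I → 𝒜 → ℤ) (θ : I → ℝ) (M : 𝒜) : ℝ :=
  degTheta φ θ M / (rkPhi φ M : ℝ)

/-- The family `φ` is additive on short exact sequences. -/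
def IsAdditiveFamily (φ : I → 𝒜 → ℤ) : Prop :=
  ∀ i, ∀ S : ShortComplex 𝒜, S.ShortExact → φ i S.X₂ = φ i S.X₁ + φ i S.X₃

/-- The family `φ` is positive. -/
def IsPositiveFamily (φ : I → 𝒜 → ℤ) : Prop :=
  (∀ i, ∀ M : 𝒜, 0 ≤ φ i M) ∧ ∀ M : 𝒜, ¬ IsZero M → ∃ i, 0 < φ i M

/-- `M` is `θ`-semistable: it is nonzero and every nonzero proper subobject has
slope at most that of `M`. -/
noncomputable def Semistable (φ : I → 𝒜 → ℤ) (θ : I → ℝ) (M : 𝒜) : Prop :=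
  ¬ IsZero M ∧ ∀ N : Subobject M, N ≠ ⊥ → N ≠ ⊤ →
    muSlope φ θ ((N : 𝒜)) ≤ muSlope φ θ M

/-- `M` is `θ`-stable. -/
noncomputable def Stable (φ : I → 𝒜 → ℤ) (θ : I → ℝ) (M : 𝒜) : Prop :=
  ¬ IsZero M ∧ ∀ N : Subobject M, N ≠ ⊥ → N ≠ ⊤ →
    muSlope φ θ ((N : 𝒜)) < muSlope φ θ M


/-- The slope `μ_θ(d)` of a dimension vector `d ∈ ℕ^I`. -/
noncomputable def muSlopeVec (θ : I → ℝ) (d : I → ℕ) : ℝ :=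
  (∑ i, θ i * (d i : ℝ)) / (∑ i, (d i : ℝ))

/-- `M` has dimension vector `d`, i.e. `φ i M = d i` for all `i`. -/
def HasDimVec (φ : I → 𝒜 → ℤ) (M : 𝒜) (d : I → ℕ) : Prop :=
  ∀ i, φ i M = (d i : ℤ)

/-- `e ∈ S_d`: `e ∈ ℕ^I \ ℚd` and there exist an object `M` with `φ(M) = d` and a
subobject `N` of `M` with `φ(N) = e`. -/
def MemSd (φ : I → 𝒜 → ℤ) (d e : I → ℕ) : Prop :=
  (¬ ∃ q : ℚ, ∀ i, (e i : ℚ) = q * (d i : ℚ)) ∧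
  ∃ (M : 𝒜) (N : Subobject M), HasDimVec φ M d ∧ HasDimVec φ ((N : 𝒜)) e

/-- `θ` and `ω` lie in the same facet of the hyperplane arrangement `ℋ(d)`:
`sgn (f(d,e)(θ)) = sgn (f(d,e)(ω))` for every `e ∈ S_d`. -/
def SameFacet (φ : I → 𝒜 → ℤ) (d : I → ℕ) (θ ω : I → ℝ) : Prop :=
  ∀ e : I → ℕ, MemSd φ d e →
    Real.sign (muSlopeVec θ d - muSlopeVec θ e) =
      Real.sign (muSlopeVec ω d - muSlopeVec ω e)

/-- The quotient object `M_{i-1}/M_i` of a decreasing chain of subobjects. -/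
noncomputable def quotObj {M : 𝒜} {n : ℕ} (F : Fin (n + 1) → Subobject M)
    (hmono : ∀ i : Fin n, F i.succ ≤ F i.castSucc) (i : Fin n) : 𝒜 :=
  cokernel (Subobject.ofLE (F i.succ) (F i.castSucc) (hmono i))

/-- `(F i)` is a Jordan–Hölder filtration of `M` with respect to `θ`:
`n ≥ 1`, `F 0 = M`, `F n = 0`, each `F (i+1)` is a proper subobject of `F i`, each
successive quotient is `θ`-stable, and `μ_θ(F i) = μ_θ(M)` for `i = 0, …, n−1`. -/
noncomputable def IsJHFiltration (φ : I → 𝒜 → ℤ) (θ : I → ℝ) {M : 𝒜} {n : ℕ}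
    (F : Fin (n + 1) → Subobject M)
    (hmono : ∀ i : Fin n, F i.succ ≤ F i.castSucc) : Prop :=
  1 ≤ n ∧ F 0 = ⊤ ∧ F (Fin.last n) = ⊥ ∧
  (∀ i : Fin n, F i.succ ≠ F i.castSucc) ∧
  (∀ i : Fin n, Stable φ θ (quotObj F hmono i)) ∧
  (∀ i : Fin n, muSlope φ θ (((F i.castSucc) : 𝒜)) = muSlope φ θ M)

/-- `M` and `N` are `S_θ`-equivalent: they admit Jordan–Hölder filtrations with respect to
`θ` of the same length whose successive quotients are isomorphic up to a permutation. -/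
noncomputable def SEquiv (φ : I → 𝒜 → ℤ) (θ : I → ℝ) (M N : 𝒜) : Prop :=
  ∃ (n : ℕ) (F : Fin (n + 1) → Subobject M)
    (hF : ∀ i : Fin n, F i.succ ≤ F i.castSucc)
    (G : Fin (n + 1) → Subobject N)
    (hG : ∀ i : Fin n, G i.succ ≤ G i.castSucc)
    (π : Equiv.Perm (Fin n)),
    IsJHFiltration φ θ F hF ∧ IsJHFiltration φ θ G hG ∧
    ∀ i : Fin n, Nonempty (quotObj F hF i ≅ quotObj G hG (π i))

/-!
For a weight `ζ` let `δ_ζ(X) = slopeDefect φ ζ d X = deg_ζ(X) - μ_ζ(d) rk(X)`, which is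
`rk(X) (μ_ζ(X) - μ_ζ(d))` for `X ≠ 0`. Unlike the slope, `δ_ζ` is additive on short exact
sequences and vanishes on zero objects. If `X` is a subobject of an object of dimension vector `d`,
then either `φ(X) ∈ ℚd` and `δ_ζ(X) = 0` for all `ζ`, or `φ(X) ∈ S_d` and
`sgn δ_ζ(X) = -sgn f(d, φ(X))(ζ)`; either way the sign of `δ` is the same at `θ` and `ω`.
Semistability of `M`, the slope conditions on a Jordan–Hölder filtration and the stability of its
quotients are all conditions on these signs: a subobject of `F (i-1) / F i` has the same `δ` as
its preimage in `M`, because `δ(F i) = 0`. Hence every `θ`-Jordan–Hölder filtration of `M` or `N`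
is an `ω`-Jordan–Hölder filtration with the same quotients.
-/

namespace Real

lemma sign_eq_neg_one_iff {r : ℝ} : sign r = -1 ↔ r < 0 := by
  refine ⟨fun h => ?_, sign_of_neg⟩
  rcases lt_trichotomy r 0 with hr | rfl | hr
  · exact hr
  · norm_num [sign_zero] at h
  · norm_num [sign_of_pos hr] at h

lemma sign_mul_of_pos {c : ℝ} (hc : 0 < c) (r : ℝ) : sign (c * r) = sign r := by
  rcases lt_trichotomy r 0 with hr | rfl | hr
  · rw [sign_of_neg hr, sign_of_neg (mul_neg_of_pos_of_neg hc hr)]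
  · rw [mul_zero]
  · rw [sign_of_pos hr, sign_of_pos (mul_pos hc hr)]

variable {a b : ℝ}

lemma neg_iff_of_sign_eq (h : sign a = sign b) : a < 0 ↔ b < 0 := by
  rw [← sign_eq_neg_one_iff, h, sign_eq_neg_one_iff]

lemma eq_zero_iff_of_sign_eq (h : sign a = sign b) : a = 0 ↔ b = 0 := by
  rw [← sign_eq_zero_iff, h, sign_eq_zero_iff]

lemma nonpos_iff_of_sign_eq (h : sign a = sign b) : a ≤ 0 ↔ b ≤ 0 := by
  rw [le_iff_lt_or_eq, le_iff_lt_or_eq, neg_iff_of_sign_eq h, eq_zero_iff_of_sign_eq h]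

end Real

lemma muSlopeVec_mul_sum (ζ : I → ℝ) (d : I → ℕ) :
    muSlopeVec ζ d * ∑ i, (d i : ℝ) = ∑ i, ζ i * d i := by
  by_cases h : ∑ i, (d i : ℝ) = 0
  · have hd := (Finset.sum_eq_zero_iff_of_nonneg fun i _ => Nat.cast_nonneg (d i)).1 h
    rw [h, mul_zero, Finset.sum_eq_zero fun i hi => by rw [hd i hi, mul_zero]]
  · exact div_mul_cancel₀ _ h

lemma muSlopeVec_of_proportional (ζ : I → ℝ) {d e : I → ℕ} {q : ℝ} (hq : q ≠ 0)
    (he : ∀ i, (e i : ℝ) = q * d i) : muSlopeVec ζ e = muSlopeVec ζ d := by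
  have hnum : ∑ i, ζ i * (e i : ℝ) = q * ∑ i, ζ i * d i := by
    rw [Finset.mul_sum]
    exact Finset.sum_congr rfl fun i _ => by rw [he i]; ring
  have hden : ∑ i, (e i : ℝ) = q * ∑ i, (d i : ℝ) := by
    rw [Finset.mul_sum]
    exact Finset.sum_congr rfl fun i _ => he i
  rw [muSlopeVec, muSlopeVec, hnum, hden, mul_div_mul_left _ _ hq]

noncomputable def slopeDefect (φ : I → 𝒜 → ℤ) (ζ : I → ℝ) (d : I → ℕ) (X : 𝒜) : ℝ :=
  degTheta φ ζ X - muSlopeVec ζ d * rkPhi φ X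

section Slopes

variable {φ : I → 𝒜 → ℤ} {ζ : I → ℝ} {d e : I → ℕ} {X : 𝒜}

omit [Category 𝒜] [Abelian 𝒜]

lemma degTheta_of_hasDimVec (hX : HasDimVec φ X e) :
    degTheta φ ζ X = ∑ i, ζ i * e i :=
  Finset.sum_congr rfl fun i _ => by rw [hX i, Int.cast_natCast]

lemma rkPhi_of_hasDimVec (hX : HasDimVec φ X e) : (rkPhi φ X : ℝ) = ∑ i, (e i : ℝ) := by
  rw [rkPhi, Int.cast_sum]
  exact Finset.sum_congr rfl fun i _ => by rw [hX i, Int.cast_natCast]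

lemma muSlope_of_hasDimVec (hX : HasDimVec φ X e) : muSlope φ ζ X = muSlopeVec ζ e := by
  rw [muSlope, degTheta_of_hasDimVec hX, rkPhi_of_hasDimVec hX, muSlopeVec]

lemma slopeDefect_of_hasDimVec (hX : HasDimVec φ X e) :
    slopeDefect φ ζ d X = (∑ i, (e i : ℝ)) * (muSlopeVec ζ e - muSlopeVec ζ d) := by
  rw [slopeDefect, degTheta_of_hasDimVec hX, rkPhi_of_hasDimVec hX, ← muSlopeVec_mul_sum ζ e]
  ring

lemma slopeDefect_self (hX : HasDimVec φ X d) : slopeDefect φ ζ d X = 0 := by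
  rw [slopeDefect_of_hasDimVec hX, sub_self, mul_zero]

lemma slopeDefect_add {Y Z : 𝒜} (h : ∀ k, φ k Y = φ k X + φ k Z) :
    slopeDefect φ ζ d Y = slopeDefect φ ζ d X + slopeDefect φ ζ d Z := by
  simp only [slopeDefect, degTheta, rkPhi, h, Int.cast_sum, Int.cast_add, mul_add,
    Finset.sum_add_distrib]
  ring

lemma muSlope_eq_muSlopeVec_iff (hX : 0 < rkPhi φ X) :
    muSlope φ ζ X = muSlopeVec ζ d ↔ slopeDefect φ ζ d X = 0 := by
  rw [muSlope, div_eq_iff (by exact_mod_cast hX.ne'), slopeDefect, sub_eq_zero]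

lemma muSlope_le_muSlopeVec_iff (hX : 0 < rkPhi φ X) :
    muSlope φ ζ X ≤ muSlopeVec ζ d ↔ slopeDefect φ ζ d X ≤ 0 := by
  rw [muSlope, div_le_iff₀ (by exact_mod_cast hX), slopeDefect, sub_nonpos]

lemma muSlope_lt_muSlopeVec_iff (hX : 0 < rkPhi φ X) :
    muSlope φ ζ X < muSlopeVec ζ d ↔ slopeDefect φ ζ d X < 0 := by
  rw [muSlope, div_lt_iff₀ (by exact_mod_cast hX), slopeDefect, sub_neg]

end Slopes

section Additivity

variable {φ : I → 𝒜 → ℤ}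

namespace IsAdditiveFamily

omit [Fintype I]
variable (hadd : IsAdditiveFamily φ) (i : I)
include hadd

lemma apply_eq_zero_of_isZero {Z : 𝒜} (hZ : IsZero Z) : φ i Z = 0 := by
  have h := hadd i (ShortComplex.mk (𝟙 Z) (𝟙 Z) (hZ.eq_of_src _ _))
    { exact := ShortComplex.exact_of_isZero_X₂ _ hZ
      mono_f := by dsimp; infer_instance
      epi_g := by dsimp; infer_instance }
  dsimp at h
  omega

lemma apply_eq_add_cokernel {X Y : 𝒜} (f : X ⟶ Y) [Mono f] :
    φ i Y = φ i X + φ i (cokernel f) :=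
  hadd i (ShortComplex.mk f (cokernel.π f) (cokernel.condition f))
    { exact := ShortComplex.exact_of_g_is_cokernel _ (cokernelIsCokernel f)
      mono_f := by dsimp; infer_instance
      epi_g := by dsimp; infer_instance }

lemma apply_eq_kernel_add {X Y : 𝒜} (g : X ⟶ Y) [Epi g] :
    φ i X = φ i (kernel g) + φ i Y :=
  hadd i (ShortComplex.mk (kernel.ι g) g (kernel.condition g))
    { exact := ShortComplex.exact_of_f_is_kernel _ (kernelIsKernel g)
      mono_f := by dsimp; infer_instance
      epi_g := by dsimp; infer_instance }

lemma apply_eq_of_iso {X Y : 𝒜} (e : X ≅ Y) : φ i X = φ i Y := by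
  rw [hadd.apply_eq_add_cokernel i e.hom,
    hadd.apply_eq_zero_of_isZero i ((isZero_zero 𝒜).of_iso (cokernel.ofEpi e.hom)), add_zero]

/-- `W` is the preimage of `P` under `Y ⟶ Y / X`. -/
lemma exists_subobject_apply_eq_add {M : 𝒜} {X Y : Subobject M} (h : X ≤ Y)
    (P : Subobject (cokernel (Subobject.ofLE X Y h))) :
    ∃ W : Subobject M, ∀ i, φ i (W : 𝒜) = φ i (X : 𝒜) + φ i (P : 𝒜) := by
  let g := cokernel.π (Subobject.ofLE X Y h) ≫ cokernel.π P.arrow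
  refine ⟨Subobject.mk (kernel.ι g ≫ Y.arrow), fun i => ?_⟩
  rw [hadd.apply_eq_of_iso i (Subobject.underlyingIso _)]
  have hY := hadd.apply_eq_kernel_add i g
  have hP := hadd.apply_eq_add_cokernel i P.arrow
  have hX := hadd.apply_eq_add_cokernel i (Subobject.ofLE X Y h)
  omega

end IsAdditiveFamily

end Additivity

lemma CategoryTheory.Subobject.not_isZero_of_ne_bot {M : 𝒜} {X : Subobject M} (h : X ≠ ⊥) :
    ¬ IsZero (X : 𝒜) := fun hX =>
  h (by rw [← Subobject.mk_arrow X]; exact Subobject.mk_eq_bot_iff_zero.mpr (hX.eq_of_src _ _))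

section Transport

variable {φ : I → 𝒜 → ℤ} {d : I → ℕ} {θ ω : I → ℝ}

omit [Abelian 𝒜] in
lemma IsPositiveFamily.rkPhi_pos (hpos : IsPositiveFamily φ) {X : 𝒜} (hX : ¬ IsZero X) :
    0 < rkPhi φ X := by
  obtain ⟨i, hi⟩ := hpos.2 X hX
  exact Finset.sum_pos' (fun j _ => hpos.1 j X) ⟨i, Finset.mem_univ i, hi⟩

lemma slopeDefect_eq_zero_of_isZero (hadd : IsAdditiveFamily φ) (ζ : I → ℝ) {X : 𝒜}
    (hX : IsZero X) : slopeDefect φ ζ d X = 0 := by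
  simp [slopeDefect, degTheta, rkPhi, hadd.apply_eq_zero_of_isZero _ hX]

lemma slopeDefect_cokernel (hadd : IsAdditiveFamily φ) (ζ : I → ℝ) {X Y : 𝒜} (f : X ⟶ Y)
    [Mono f] : slopeDefect φ ζ d (cokernel f) = slopeDefect φ ζ d Y - slopeDefect φ ζ d X := by
  rw [slopeDefect_add (hadd.apply_eq_add_cokernel · f)]
  ring

omit [Abelian 𝒜] in
theorem sign_slopeDefect_eq_of_sameFacet (hpos : IsPositiveFamily φ) (hfacet : SameFacet φ d θ ω)
    {M : 𝒜} (hM : HasDimVec φ M d) (X : Subobject M) :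
    Real.sign (slopeDefect φ θ d X) = Real.sign (slopeDefect φ ω d X) := by
  set e : I → ℕ := fun i => (φ i X).toNat
  have hX : HasDimVec φ X e := fun i => (Int.toNat_of_nonneg (hpos.1 i _)).symm
  rw [slopeDefect_of_hasDimVec hX, slopeDefect_of_hasDimVec hX]
  by_cases hprop : ∃ q : ℚ, ∀ i, (e i : ℚ) = q * d i
  · obtain ⟨q, hq⟩ := hprop
    have hqR : ∀ i, (e i : ℝ) = q * d i := fun i => by exact_mod_cast hq i
    rcases eq_or_ne q 0 with rfl | hq0
    · simp [hqR]
    · simp [muSlopeVec_of_proportional _ (Rat.cast_ne_zero.mpr hq0) hqR]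
  · have he : ∃ i, e i ≠ 0 := by
      by_contra! h0
      exact hprop ⟨0, fun i => by simp [h0 i]⟩
    obtain ⟨i, hi⟩ := he
    have he_pos : 0 < ∑ i, (e i : ℝ) := Finset.sum_pos' (fun j _ => Nat.cast_nonneg _)
      ⟨i, Finset.mem_univ i, Nat.cast_pos.mpr (Nat.pos_of_ne_zero hi)⟩
    rw [Real.sign_mul_of_pos he_pos, Real.sign_mul_of_pos he_pos, ← neg_sub (muSlopeVec θ d),
      ← neg_sub (muSlopeVec ω d), Real.sign_neg, Real.sign_neg, hfacet e ⟨hprop, M, X, hM, hX⟩]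

lemma sign_slopeDefect_eq_cokernel_ofLE (hadd : IsAdditiveFamily φ) {M : 𝒜}
    (hsign : ∀ W : Subobject M,
      Real.sign (slopeDefect φ θ d W) = Real.sign (slopeDefect φ ω d W))
    {X Y : Subobject M} (h : X ≤ Y) (hθ : slopeDefect φ θ d X = 0)
    (hω : slopeDefect φ ω d X = 0) (P : Subobject (cokernel (Subobject.ofLE X Y h))) :
    Real.sign (slopeDefect φ θ d P) = Real.sign (slopeDefect φ ω d P) := by
  obtain ⟨W, hW⟩ := hadd.exists_subobject_apply_eq_add h P
  have := hsign W
  rwa [slopeDefect_add hW, slopeDefect_add hW, hθ, hω, zero_add, zero_add] at this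

theorem Semistable.of_sign_slopeDefect_eq (hpos : IsPositiveFamily φ) {Q : 𝒜}
    (hθ : slopeDefect φ θ d Q = 0) (hω : slopeDefect φ ω d Q = 0)
    (hsign : ∀ P : Subobject Q,
      Real.sign (slopeDefect φ θ d P) = Real.sign (slopeDefect φ ω d P))
    (h : Semistable φ θ Q) : Semistable φ ω Q := by
  refine ⟨h.1, fun P hbot htop => ?_⟩
  have hP := hpos.rkPhi_pos (Subobject.not_isZero_of_ne_bot hbot)
  have hQ := hpos.rkPhi_pos h.1
  have hle := h.2 P hbot htop
  rw [(muSlope_eq_muSlopeVec_iff hQ).2 hθ, muSlope_le_muSlopeVec_iff hP,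
    Real.nonpos_iff_of_sign_eq (hsign P)] at hle
  rwa [(muSlope_eq_muSlopeVec_iff hQ).2 hω, muSlope_le_muSlopeVec_iff hP]

theorem Stable.of_sign_slopeDefect_eq (hpos : IsPositiveFamily φ) {Q : 𝒜}
    (hθ : slopeDefect φ θ d Q = 0) (hω : slopeDefect φ ω d Q = 0)
    (hsign : ∀ P : Subobject Q,
      Real.sign (slopeDefect φ θ d P) = Real.sign (slopeDefect φ ω d P))
    (h : Stable φ θ Q) : Stable φ ω Q := by
  refine ⟨h.1, fun P hbot htop => ?_⟩
  have hP := hpos.rkPhi_pos (Subobject.not_isZero_of_ne_bot hbot)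
  have hQ := hpos.rkPhi_pos h.1
  have hlt := h.2 P hbot htop
  rw [(muSlope_eq_muSlopeVec_iff hQ).2 hθ, muSlope_lt_muSlopeVec_iff hP,
    Real.neg_iff_of_sign_eq (hsign P)] at hlt
  rwa [(muSlope_eq_muSlopeVec_iff hQ).2 hω, muSlope_lt_muSlopeVec_iff hP]

theorem IsJHFiltration.of_sign_slopeDefect_eq (hadd : IsAdditiveFamily φ)
    (hpos : IsPositiveFamily φ) {M : 𝒜} (hM : HasDimVec φ M d)
    (hsign : ∀ X : Subobject M,
      Real.sign (slopeDefect φ θ d X) = Real.sign (slopeDefect φ ω d X))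
    {n : ℕ} {F : Fin (n + 1) → Subobject M} {hF : ∀ i : Fin n, F i.succ ≤ F i.castSucc}
    (h : IsJHFiltration φ θ F hF) : IsJHFiltration φ ω F hF := by
  obtain ⟨hn, h0, hlast, hne, hstab, hslope⟩ := h
  have hrk : ∀ i : Fin n, 0 < rkPhi φ (F i.castSucc : 𝒜) := fun i =>
    hpos.rkPhi_pos <| Subobject.not_isZero_of_ne_bot fun hbot =>
      hne i ((le_bot_iff.mp (hbot ▸ hF i)).trans hbot.symm)
  have hθ : ∀ j, slopeDefect φ θ d (F j : 𝒜) = 0 := by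
    refine Fin.lastCases ?_ fun i => ?_
    · rw [hlast]
      exact slopeDefect_eq_zero_of_isZero hadd θ
        ((isZero_zero 𝒜).of_iso Subobject.botCoeIsoZero)
    · rw [← muSlope_eq_muSlopeVec_iff (hrk i), ← muSlope_of_hasDimVec hM]
      exact hslope i
  have hω : ∀ j, slopeDefect φ ω d (F j : 𝒜) = 0 := fun j =>
    (Real.eq_zero_iff_of_sign_eq (hsign (F j))).1 (hθ j)
  refine ⟨hn, h0, hlast, hne, fun i => ?_, fun i => ?_⟩
  · refine (hstab i).of_sign_slopeDefect_eq hpos ?_ ?_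
      (sign_slopeDefect_eq_cokernel_ofLE hadd hsign (hF i) (hθ _) (hω _))
    · rw [quotObj, slopeDefect_cokernel hadd, hθ, hθ, sub_zero]
    · rw [quotObj, slopeDefect_cokernel hadd, hω, hω, sub_zero]
  · rw [muSlope_of_hasDimVec hM, muSlope_eq_muSlopeVec_iff (hrk i)]
    exact hω _

end Transport

theorem sEquiv_of_sameFacet_general
    (φ : I → 𝒜 → ℤ) (hadd : IsAdditiveFamily φ) (hpos : IsPositiveFamily φ)
    (d : I → ℕ) (θ ω : I → ℝ) (hfacet : SameFacet φ d θ ω)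
    (M N : 𝒜) (hM : HasDimVec φ M d) (hN : HasDimVec φ N d)
    (hMss : Semistable φ θ M) (hNss : Semistable φ θ N)
    (hSe : SEquiv φ θ M N) :
    Semistable φ ω M ∧ Semistable φ ω N ∧ SEquiv φ ω M N := by
  have hsignM := sign_slopeDefect_eq_of_sameFacet hpos hfacet hM
  have hsignN := sign_slopeDefect_eq_of_sameFacet hpos hfacet hN
  obtain ⟨n, F, hF, G, hG, π, hJF, hJG, hiso⟩ := hSe
  exact ⟨hMss.of_sign_slopeDefect_eq hpos (slopeDefect_self hM) (slopeDefect_self hM) hsignM,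
    hNss.of_sign_slopeDefect_eq hpos (slopeDefect_self hN) (slopeDefect_self hN) hsignN,
    n, F, hF, G, hG, π, hJF.of_sign_slopeDefect_eq hadd hpos hM hsignM,
    hJG.of_sign_slopeDefect_eq hadd hpos hN hsignN, hiso⟩

/-- if `θ` and `ω` lie in the same facet of `ℋ(d)`, `M` and `N` are
`θ`-semistable with `φ(M) = φ(N) = d`, and `M` is `S_θ`-equivalent to `N`, then `M` and
`N` are `ω`-semistable and `M` is `S_ω`-equivalent to `N`. -/
theorem sEquiv_of_sameFacet [Nonempty I]
    (φ : I → 𝒜 → ℤ) (hadd : IsAdditiveFamily φ) (hpos : IsPositiveFamily φ)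
    (d : I → ℕ) (hd : d ≠ 0) (θ ω : I → ℝ) (hfacet : SameFacet φ d θ ω)
    (M N : 𝒜) (hM : HasDimVec φ M d) (hN : HasDimVec φ N d)
    (hMss : Semistable φ θ M) (hNss : Semistable φ θ N)
    (hSe : SEquiv φ θ M N) :
    Semistable φ ω M ∧ Semistable φ ω N ∧ SEquiv φ ω M N :=
  sEquiv_of_sameFacet_general φ hadd hpos d θ ω hfacet M N hM hN hMss hNss hSe
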